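/- arXiv:2305.12798 — 2 statements merged into one kernel-verified Lean document; each statement's English description precedes it below -/
import Mathlib

section
/- Let Φ ∈ ℝ^{d×n} satisfy Φ Φᵀ = C₂ I_d. Suppose T = Φᵀ S Φ where S is block-diagonal of the form diag(T_s, I_{d_c}) with T_s ∈ ℝ^{d_s×d_s}, and W' = diag(I_{d_s}, Λ) with Λ ∈ ℝ^{d_c×d_c} diagonal. Then T (Φᵀ W' Φ) = (Φᵀ W' Φ) T. -/
/-! Since `Φ Φᵀ = C₂ I`, the map `A ↦ Φᵀ A Φ` is multiplicative up to the scalar `C₂`, hence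
preserves commutation; and `diag(T_s, I)` commutes with `diag(I, Λ)` block by block. -/

open Matrix

theorem Commute.fromBlocks_zero_zero {l m R : Type*} [Fintype l] [Fintype m] [Semiring R]
    {A₁ B₁ : Matrix l l R} {A₂ B₂ : Matrix m m R} (h₁ : Commute A₁ B₁) (h₂ : Commute A₂ B₂) :
    Commute (fromBlocks A₁ 0 0 A₂) (fromBlocks B₁ 0 0 B₂) := by
  simp only [Commute, SemiconjBy, fromBlocks_multiply, Matrix.mul_zero, Matrix.zero_mul,
    add_zero, zero_add, h₁.eq, h₂.eq]

theorem Matrix.mul_conj_mul_conj_of_mul_eq_smul_one {m n R : Type*} [Fintype m] [Fintype n]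
    [DecidableEq m] [CommSemiring R] {Ψ : Matrix n m R} {Φ : Matrix m n R} {c : R}
    (hΦΨ : Φ * Ψ = c • 1) (A B : Matrix m m R) :
    (Ψ * A * Φ) * (Ψ * B * Φ) = c • (Ψ * (A * B) * Φ) := by
  calc (Ψ * A * Φ) * (Ψ * B * Φ) = Ψ * A * (Φ * Ψ) * B * Φ := by simp only [Matrix.mul_assoc]
    _ = c • (Ψ * (A * B) * Φ) := by
      rw [hΦΨ, Matrix.mul_smul, Matrix.mul_one, Matrix.smul_mul, Matrix.smul_mul]
      simp only [Matrix.mul_assoc]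

theorem Commute.conj_of_mul_eq_smul_one {m n R : Type*} [Fintype m] [Fintype n]
    [DecidableEq m] [CommSemiring R] {Ψ : Matrix n m R} {Φ : Matrix m n R} {c : R}
    (hΦΨ : Φ * Ψ = c • 1) {A B : Matrix m m R} (h : Commute A B) :
    Commute (Ψ * A * Φ) (Ψ * B * Φ) := by
  rw [Commute, SemiconjBy, mul_conj_mul_conj_of_mul_eq_smul_one hΦΨ,
    mul_conj_mul_conj_of_mul_eq_smul_one hΦΨ, h.eq]

theorem stmt_1 {ds dc n : ℕ} (C₂ : ℝ)
    (Φ : Matrix (Fin ds ⊕ Fin dc) (Fin n) ℝ)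
    (Ts : Matrix (Fin ds) (Fin ds) ℝ) (Λ : Fin dc → ℝ)
    (hΦ : Φ * Φ.transpose = C₂ • (1 : Matrix (Fin ds ⊕ Fin dc) (Fin ds ⊕ Fin dc) ℝ)) :
    (Φ.transpose * (Matrix.fromBlocks Ts 0 0 1 : Matrix (Fin ds ⊕ Fin dc) (Fin ds ⊕ Fin dc) ℝ) * Φ) *
        (Φ.transpose * (Matrix.fromBlocks 1 0 0 (Matrix.diagonal Λ) : Matrix (Fin ds ⊕ Fin dc) (Fin ds ⊕ Fin dc) ℝ) * Φ) =
      (Φ.transpose * (Matrix.fromBlocks 1 0 0 (Matrix.diagonal Λ) : Matrix (Fin ds ⊕ Fin dc) (Fin ds ⊕ Fin dc) ℝ) * Φ) *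
        (Φ.transpose * (Matrix.fromBlocks Ts 0 0 1 : Matrix (Fin ds ⊕ Fin dc) (Fin ds ⊕ Fin dc) ℝ) * Φ) :=
  (((Commute.one_right Ts).fromBlocks_zero_zero (Commute.one_left _)).conj_of_mul_eq_smul_one hΦ).eq
end

section
/- Let T = Φᵀ diag(T_s, I_{d_c}) Φ with Φ Φᵀ = C₂ I_d, let B = Φᵀ diag(A, Λ') Φ with Λ' diagonal, and let W' = diag(I_{d_s}, Λ) with Λ diagonal. Then T B (Φᵀ W' Φ) = (Φᵀ W' Φ) T B. -/
/-!
Since `Φ Φᵀ = C₂ • 1`, the map `X ↦ Φᵀ X Φ` is multiplicative up to the factor `C₂`, so it carries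
commuting matrices to commuting matrices. Upstairs, `diag(T_s, I)` and `diag(A, Λ')` both commute
with `diag(I, Λ)` blockwise, because diagonal matrices commute.
-/

namespace Matrix

theorem commute_fromBlocks_zero_zero {l o R : Type*} [Fintype l] [Fintype o] [Semiring R]
    {A A' : Matrix l l R} {D D' : Matrix o o R}
    (hA : Commute A A') (hD : Commute D D') :
    Commute (fromBlocks A 0 0 D) (fromBlocks A' 0 0 D') := by
  simp only [Commute, SemiconjBy, fromBlocks_multiply, Matrix.mul_zero, Matrix.zero_mul,
    add_zero, zero_add, hA.eq, hD.eq]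

variable {m n R : Type*} [Fintype m] [Fintype n] [DecidableEq m] [CommSemiring R]

theorem transpose_mul_mul_mul_transpose_mul_mul {Φ : Matrix m n R} {c : R}
    (hΦ : Φ * Φᵀ = c • 1) (X Y : Matrix m m R) :
    (Φᵀ * X * Φ) * (Φᵀ * Y * Φ) = c • (Φᵀ * (X * Y) * Φ) := by
  calc (Φᵀ * X * Φ) * (Φᵀ * Y * Φ) = Φᵀ * X * (Φ * Φᵀ) * Y * Φ := by
        simp only [Matrix.mul_assoc]
    _ = c • (Φᵀ * (X * Y) * Φ) := by
        rw [hΦ]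
        simp only [Matrix.mul_smul, Matrix.smul_mul, Matrix.mul_one, Matrix.mul_assoc]

theorem commute_transpose_mul_mul {Φ : Matrix m n R} {c : R} (hΦ : Φ * Φᵀ = c • 1)
    {X Y : Matrix m m R} (h : Commute X Y) : Commute (Φᵀ * X * Φ) (Φᵀ * Y * Φ) := by
  rw [Commute, SemiconjBy, transpose_mul_mul_mul_transpose_mul_mul hΦ,
    transpose_mul_mul_mul_transpose_mul_mul hΦ, h.eq]

end Matrix

open Matrix in
theorem stmt_5 {ds dc n : ℕ} (C₂ : ℝ)
    (Φ : Matrix (Fin ds ⊕ Fin dc) (Fin n) ℝ)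
    (Ts : Matrix (Fin ds) (Fin ds) ℝ)
    (A : Matrix (Fin ds) (Fin ds) ℝ) (Λ' Λ : Fin dc → ℝ)
    (hΦ : Φ * Φ.transpose = C₂ • (1 : Matrix (Fin ds ⊕ Fin dc) (Fin ds ⊕ Fin dc) ℝ)) :
    (Φ.transpose * (Matrix.fromBlocks Ts 0 0 1 : Matrix (Fin ds ⊕ Fin dc) (Fin ds ⊕ Fin dc) ℝ) * Φ) *
        (Φ.transpose * (Matrix.fromBlocks A 0 0 (Matrix.diagonal Λ') : Matrix (Fin ds ⊕ Fin dc) (Fin ds ⊕ Fin dc) ℝ) * Φ) *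
        (Φ.transpose * (Matrix.fromBlocks 1 0 0 (Matrix.diagonal Λ) : Matrix (Fin ds ⊕ Fin dc) (Fin ds ⊕ Fin dc) ℝ) * Φ) =
      (Φ.transpose * (Matrix.fromBlocks 1 0 0 (Matrix.diagonal Λ) : Matrix (Fin ds ⊕ Fin dc) (Fin ds ⊕ Fin dc) ℝ) * Φ) *
        ((Φ.transpose * (Matrix.fromBlocks Ts 0 0 1 : Matrix (Fin ds ⊕ Fin dc) (Fin ds ⊕ Fin dc) ℝ) * Φ) *
          (Φ.transpose * (Matrix.fromBlocks A 0 0 (Matrix.diagonal Λ') : Matrix (Fin ds ⊕ Fin dc) (Fin ds ⊕ Fin dc) ℝ) * Φ)) := by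
  have hT : Commute (fromBlocks Ts 0 0 1) (fromBlocks 1 0 0 (diagonal Λ)) :=
    commute_fromBlocks_zero_zero (Commute.one_right Ts) (Commute.one_left _)
  have hB : Commute (fromBlocks A 0 0 (diagonal Λ')) (fromBlocks 1 0 0 (diagonal Λ)) :=
    commute_fromBlocks_zero_zero (Commute.one_right A) (commute_diagonal Λ' Λ)
  rw [transpose_mul_mul_mul_transpose_mul_mul hΦ]
  exact ((commute_transpose_mul_mul hΦ (hT.mul_left hB)).smul_left C₂).eq
end
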